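/- arXiv:1512.06817 — 2 statements merged into one kernel-verified Lean document; each statement's English description precedes it below -/
import Mathlib

section
/- Let W : ℕ → A be an infinite word over a finite alphabet A. The following are equivalent: (1) W is recurrent, i.e., every factor of W has infinitely many occurrences; (2) for any two factors u, v of W of the same length, there exists a factor of W having u as a prefix and v as a suffix; (3) every factor of W has at least two occurrences; (4) every factor u of W is left-extendable, i.e., there exists a letter x ∈ A such that xu is a factor of W. -/
/-- The factor of the infinite word `W` of length `n` occurring at position `i`. -/
def factorAt {A : Type*} (W : ℕ → A) (i n : ℕ) : List A :=
  (List.range n).map (fun j => W (i + j))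

/-- `u` occurs in `W` at position `i`. -/
def occursAt {A : Type*} (W : ℕ → A) (u : List A) (i : ℕ) : Prop :=
  u = factorAt W i u.length

/-- `u` is a factor of the infinite word `W`. -/
def IsFactor {A : Type*} (W : ℕ → A) (u : List A) : Prop :=
  ∃ i : ℕ, occursAt W u i

/-!
(1) → (2): if `u` occurs at `i` and `v` at some `j ≥ i`, the factor from `i` to the end of that
occurrence of `v` has prefix `u` and suffix `v`.
(2) → (3): an occurrence of `u` at `i` lies inside the prefix of length `m = i + |u|`. Applying (2)
to the factor of length `m` at position `1` and to that prefix gives an occurrence of the prefix at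
a positive position, hence a second occurrence of `u`.
(3) → (4): one of two distinct occurrences of `u` is at a positive position `k`, so
`W (k - 1) :: u` is a factor.
(4) → (1): extending `u` to the left `n` times gives an occurrence of `u` at a position `≥ n`.
-/

section Factors

variable {A : Type*} (W : ℕ → A)

@[simp]
lemma factorAt_length (i n : ℕ) : (factorAt W i n).length = n := by
  simp [factorAt]

lemma factorAt_add (i n k : ℕ) :
    factorAt W i (n + k) = factorAt W i n ++ factorAt W (i + n) k := by
  simp [factorAt, List.range_add, Function.comp_def, add_assoc]

lemma factorAt_one (i : ℕ) : factorAt W i 1 = [W i] := by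
  simp [factorAt]

lemma occursAt_factorAt (i n : ℕ) : occursAt W (factorAt W i n) i := by
  simp [occursAt]

lemma isFactor_factorAt (i n : ℕ) : IsFactor W (factorAt W i n) :=
  ⟨i, occursAt_factorAt W i n⟩

variable {W}

lemma occursAt_append_iff {a b : List A} {j : ℕ} :
    occursAt W (a ++ b) j ↔ occursAt W a j ∧ occursAt W b (j + a.length) := by
  rw [occursAt, List.length_append, factorAt_add]
  constructor
  · intro h
    exact List.append_inj h (factorAt_length W j _).symm
  · rintro ⟨ha, hb⟩
    exact congrArg₂ (· ++ ·) ha hb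

lemma occursAt_cons_iff {x : A} {u : List A} {j : ℕ} :
    occursAt W (x :: u) j ↔ x = W j ∧ occursAt W u (j + 1) := by
  rw [← List.singleton_append, occursAt_append_iff, occursAt, List.length_singleton,
    factorAt_one, List.singleton_inj]

lemma occursAt.eq_factorAt {u : List A} {i : ℕ} (h : occursAt W u i) :
    u = factorAt W i u.length :=
  h

lemma occursAt.of_occursAt_prefix {u : List A} {i j : ℕ} (hu : occursAt W u i)
    (hp : occursAt W (factorAt W 0 (i + u.length)) j) : occursAt W u (j + i) := by
  rw [factorAt_add, zero_add, ← hu.eq_factorAt] at hp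
  simpa using (occursAt_append_iff.1 hp).2

lemma occursAt.prefix_suffix_factorAt {u v : List A} {i j : ℕ} (hu : occursAt W u i)
    (hv : occursAt W v j) (hij : i ≤ j) (hlen : u.length ≤ v.length) :
    u <+: factorAt W i (j - i + v.length) ∧ v <:+ factorAt W i (j - i + v.length) := by
  constructor
  · rw [show j - i + v.length = u.length + (j + v.length - i - u.length) by omega,
      factorAt_add, ← hu.eq_factorAt]
    exact List.prefix_append _ _
  · rw [factorAt_add, Nat.add_sub_cancel' hij, ← hv.eq_factorAt]
    exact List.suffix_append _ _

end Factors

section Recurrence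

variable {A : Type*} {W : ℕ → A}

lemma exists_pos_occursAt_prefix
    (h : ∀ u v : List A, IsFactor W u → IsFactor W v → u.length = v.length →
      ∃ w : List A, IsFactor W w ∧ u <+: w ∧ v <:+ w) (m : ℕ) :
    ∃ j, 0 < j ∧ occursAt W (factorAt W 0 m) j := by
  obtain ⟨w, ⟨k, hw⟩, hpre, a, rfl⟩ :=
    h (factorAt W 1 m) (factorAt W 0 m) (isFactor_factorAt W 1 m) (isFactor_factorAt W 0 m)
      (by simp)
  have hocc := (occursAt_append_iff.1 hw).2
  rcases Nat.eq_zero_or_pos (k + a.length) with hzero | hpos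
  · -- The suffix is the whole of `w`, so the shifted factor is the prefix itself.
    obtain rfl : a = [] := List.eq_nil_of_length_eq_zero (by omega)
    have hshift : factorAt W 1 m = factorAt W 0 m := hpre.eq_of_length (by simp)
    exact ⟨1, one_pos, hshift ▸ occursAt_factorAt W 1 m⟩
  · exact ⟨_, hpos, hocc⟩

lemma exists_occursAt_ge_of_forall_exists_cons
    (h : ∀ u : List A, IsFactor W u → ∃ x : A, IsFactor W (x :: u)) (n : ℕ) :
    ∀ u : List A, IsFactor W u → ∃ j, n ≤ j ∧ occursAt W u j := by
  induction n with
  | zero => exact fun u ⟨i, hi⟩ ↦ ⟨i, Nat.zero_le i, hi⟩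
  | succ n ih =>
    intro u hu
    obtain ⟨x, hx⟩ := h u hu
    obtain ⟨j, hnj, hj⟩ := ih (x :: u) hx
    exact ⟨j + 1, by omega, (occursAt_cons_iff.1 hj).2⟩

end Recurrence

theorem stmt4_general {A : Type*} (W : ℕ → A) :
    List.TFAE
      [∀ u : List A, IsFactor W u → {i : ℕ | occursAt W u i}.Infinite,
       ∀ u v : List A, IsFactor W u → IsFactor W v → u.length = v.length →
         ∃ w : List A, IsFactor W w ∧ u <+: w ∧ v <:+ w,
       ∀ u : List A, IsFactor W u → ∃ i j : ℕ, i ≠ j ∧ occursAt W u i ∧ occursAt W u j,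
       ∀ u : List A, IsFactor W u → ∃ x : A, IsFactor W (x :: u)] := by
  tfae_have 1 → 2 := by
    intro h u v ⟨i, hu⟩ hv hlen
    obtain ⟨j, hj, hij⟩ := (h v hv).exists_gt i
    exact ⟨_, isFactor_factorAt W i _, hu.prefix_suffix_factorAt hj hij.le hlen.le⟩
  tfae_have 2 → 3 := by
    intro h u ⟨i, hu⟩
    obtain ⟨j, hj, hp⟩ := exists_pos_occursAt_prefix h (i + u.length)
    exact ⟨i, j + i, by omega, hu, hu.of_occursAt_prefix hp⟩
  tfae_have 3 → 4 := by
    intro h u hu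
    obtain ⟨i, j, hij, hi, hj⟩ := h u hu
    obtain ⟨k, hk⟩ : ∃ k, occursAt W u (k + 1) := by
      rcases i with _ | k
      · rcases j with _ | k
        · exact absurd rfl hij
        · exact ⟨k, hj⟩
      · exact ⟨k, hi⟩
    exact ⟨W k, k, occursAt_cons_iff.2 ⟨rfl, hk⟩⟩
  tfae_have 4 → 1 := fun h u hu ↦ Set.infinite_of_forall_exists_gt fun n ↦
    (exists_occursAt_ge_of_forall_exists_cons h (n + 1) u hu).imp fun _ ⟨hn, hj⟩ ↦ ⟨hj, hn⟩
  tfae_finish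

/-- For an infinite word `W` over a finite alphabet the following are equivalent:
(1) `W` is recurrent (every factor occurs infinitely often);
(2) for any two factors `u, v` of the same length there is a factor with prefix `u`
    and suffix `v`;
(3) every factor occurs at least twice;
(4) every factor is left-extendable. -/
theorem stmt4 {A : Type*} [Fintype A] (W : ℕ → A) :
    List.TFAE
      [∀ u : List A, IsFactor W u → {i : ℕ | occursAt W u i}.Infinite,
       ∀ u v : List A, IsFactor W u → IsFactor W v → u.length = v.length →
         ∃ w : List A, IsFactor W w ∧ u <+: w ∧ v <:+ w,
       ∀ u : List A, IsFactor W u → ∃ i j : ℕ, i ≠ j ∧ occursAt W u i ∧ occursAt W u j,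
       ∀ u : List A, IsFactor W u → ∃ x : A, IsFactor W (x :: u)] :=
  stmt4_general W
end

section
/- If an infinite word W : ℕ → A over a finite alphabet A satisfies T_W(n) = n + 1 for all n ≥ 1, then W is recurrent, i.e., every factor of W has infinitely many occurrences. -/
/-- The complexity function: the number of distinct factors of `W` of length `n`. -/
noncomputable def complexity {A : Type*} (W : ℕ → A) (n : ℕ) : ℕ :=
  Set.ncard {u : List A | u.length = n ∧ IsFactor W u}

/-!
If a factor `u` of length `m ≥ 1` had no occurrence from position `N` on, the suffix of `W`
starting at `N` would have at most `m` factors of length `m`. By Morse–Hedlund that suffix, hence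
`W`, is eventually periodic, say with preperiod `a` and period `p`; then every factor of `W` occurs
before position `a + p`, so `W` has at most `a + p` factors of length `a + p`, not `a + p + 1`.

Morse–Hedlund itself: the number of factors of length `n` is nondecreasing in `n` and equals `1`
at `n = 0`, so being at most `m` at `m` forces a plateau `n`, where every factor of length `n` has a
unique right extension. Two occurrences of the same factor of length `n` then start equal suffixes.
-/

namespace InfiniteWord

variable {A : Type*}

def factors (W : ℕ → A) (n : ℕ) : Set (List A) :=
  Set.range fun i => factorAt W i n

@[simp]
lemma length_factorAt (W : ℕ → A) (i n : ℕ) : (factorAt W i n).length = n := by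
  simp [factorAt]

lemma factorAt_succ (W : ℕ → A) (i n : ℕ) :
    factorAt W i (n + 1) = factorAt W i n ++ [W (i + n)] := by
  simp [factorAt, List.range_succ]

lemma take_factorAt_succ (W : ℕ → A) (i n : ℕ) :
    (factorAt W i (n + 1)).take n = factorAt W i n := by
  simp [factorAt_succ]

lemma factorAt_eq_factorAt_iff {V W : ℕ → A} {i j n : ℕ} :
    factorAt V i n = factorAt W j n ↔ ∀ r < n, V (i + r) = W (j + r) := by
  simp [factorAt, List.map_inj_left]

lemma factorAt_shift (W : ℕ → A) (N i n : ℕ) :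
    factorAt (fun t => W (N + t)) i n = factorAt W (N + i) n := by
  simp [factorAt, Nat.add_assoc]

lemma occursAt_nil (W : ℕ → A) (i : ℕ) : occursAt W [] i := by
  simp [occursAt, factorAt]

lemma mem_factors {W : ℕ → A} {n : ℕ} {u : List A} :
    u ∈ factors W n ↔ u.length = n ∧ IsFactor W u := by
  constructor
  · rintro ⟨i, rfl⟩
    exact ⟨length_factorAt W i n, i, by rw [occursAt, length_factorAt]⟩
  · rintro ⟨rfl, i, hi⟩
    exact ⟨i, hi.symm⟩

lemma complexity_eq_ncard_factors (W : ℕ → A) (n : ℕ) :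
    complexity W n = (factors W n).ncard := by
  simp only [complexity, factors, ← mem_factors (W := W)]
  rfl

lemma factors_finite [Finite A] (W : ℕ → A) (n : ℕ) : (factors W n).Finite :=
  (List.finite_length_eq A n).subset fun _ hu => (mem_factors.mp hu).1

lemma factors_eq_image_take (W : ℕ → A) (n : ℕ) :
    factors W n = List.take n '' factors W (n + 1) := by
  simp only [factors, ← Set.range_comp, Function.comp_def, take_factorAt_succ]

lemma factors_zero (W : ℕ → A) : factors W 0 = {[]} := by
  ext u
  simp [factors, factorAt]

lemma ncard_factors_le_succ [Finite A] (W : ℕ → A) (n : ℕ) :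
    (factors W n).ncard ≤ (factors W (n + 1)).ncard := by
  rw [factors_eq_image_take]
  exact Set.ncard_image_le (factors_finite W (n + 1))

lemma exists_ncard_factors_eq_succ [Finite A] {W : ℕ → A} {m : ℕ}
    (hm : (factors W m).ncard ≤ m) :
    ∃ n < m, (factors W n).ncard = (factors W (n + 1)).ncard := by
  by_contra! hne
  have hgrow : ∀ n ≤ m, n + 1 ≤ (factors W n).ncard := by
    intro n hn
    induction n with
    | zero => simp [factors_zero]
    | succ k ih =>
      have := (ncard_factors_le_succ W k).lt_of_ne (hne k (by omega))
      have := ih (by omega)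
      omega
  have := hgrow m le_rfl
  omega

/-- Equal counts make `List.take n` injective on factors of length `n + 1`, so each factor of
length `n` has a unique right extension. -/
lemma apply_add_eq_of_factorAt_eq [Finite A] {W : ℕ → A} {n : ℕ}
    (hn : (factors W n).ncard = (factors W (n + 1)).ncard) {i j : ℕ}
    (hij : factorAt W i n = factorAt W j n) : W (i + n) = W (j + n) := by
  have hinj : Set.InjOn (List.take n) (factors W (n + 1)) :=
    Set.injOn_of_ncard_image_eq (by rw [← factors_eq_image_take, hn]) (factors_finite W (n + 1))
  have : factorAt W i (n + 1) = factorAt W j (n + 1) :=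
    hinj ⟨i, rfl⟩ ⟨j, rfl⟩ (by rw [take_factorAt_succ, take_factorAt_succ, hij])
  rwa [factorAt_succ, factorAt_succ, hij, List.append_cancel_left_eq, List.singleton_inj] at this

lemma forall_apply_add_eq_of_factorAt_eq [Finite A] {W : ℕ → A} {n : ℕ}
    (hn : (factors W n).ncard = (factors W (n + 1)).ncard) {i j : ℕ}
    (hij : factorAt W i n = factorAt W j n) : ∀ t, W (i + t) = W (j + t) := by
  intro t
  induction t using Nat.strong_induction_on with
  | _ t ih =>
    rcases lt_or_ge t n with htn | htn
    · exact factorAt_eq_factorAt_iff.mp hij t htn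
    · obtain ⟨k, rfl⟩ := Nat.exists_eq_add_of_le' htn
      have hk : factorAt W (i + k) n = factorAt W (j + k) n :=
        factorAt_eq_factorAt_iff.mpr fun r hr => by
          simpa only [Nat.add_assoc] using ih (k + r) (by omega)
      simpa only [Nat.add_assoc] using apply_add_eq_of_factorAt_eq hn hk

/-- Morse–Hedlund. -/
theorem exists_eventually_periodic_of_ncard_factors_le [Finite A] {W : ℕ → A} {m : ℕ}
    (hm : (factors W m).ncard ≤ m) : ∃ a p, 0 < p ∧ ∀ t, a ≤ t → W (t + p) = W t := by
  obtain ⟨n, -, hn⟩ := exists_ncard_factors_eq_succ hm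
  obtain ⟨i₀, -, j₀, -, hne, heq⟩ := Set.infinite_univ.exists_ne_map_eq_of_mapsTo
    (f := fun i => factorAt W i n) (fun i _ => Set.mem_range_self i) (factors_finite W n)
  obtain ⟨i, j, hij, hfac⟩ : ∃ i j, i < j ∧ factorAt W i n = factorAt W j n := by
    rcases hne.lt_or_gt with h | h
    exacts [⟨i₀, j₀, h, heq⟩, ⟨j₀, i₀, h, heq.symm⟩]
  refine ⟨i, j - i, by omega, fun t ht => ?_⟩
  have := forall_apply_add_eq_of_factorAt_eq hn hfac (t - i)
  rw [show i + (t - i) = t by omega, show j + (t - i) = t + (j - i) by omega] at this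
  exact this.symm

lemma factorAt_add_period {W : ℕ → A} {a p : ℕ} (hper : ∀ t, a ≤ t → W (t + p) = W t)
    {s : ℕ} (hs : a ≤ s) (n : ℕ) : factorAt W (s + p) n = factorAt W s n :=
  factorAt_eq_factorAt_iff.mpr fun r _ => by
    rw [Nat.add_right_comm, hper (s + r) (by omega)]

lemma ncard_factors_le_of_periodic {W : ℕ → A} {a p : ℕ} (hp : 0 < p)
    (hper : ∀ t, a ≤ t → W (t + p) = W t) (n : ℕ) : (factors W n).ncard ≤ a + p := by
  have hrep : ∀ s, ∃ q < a + p, factorAt W q n = factorAt W s n := by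
    intro s
    induction s using Nat.strong_induction_on with
    | _ s ih =>
      rcases lt_or_ge s (a + p) with hs | hs
      · exact ⟨s, hs, rfl⟩
      · obtain ⟨q, hq, hqs⟩ := ih (s - p) (by omega)
        refine ⟨q, hq, ?_⟩
        rw [hqs, ← factorAt_add_period hper (by omega), Nat.sub_add_cancel (by omega)]
  calc (factors W n).ncard ≤ ((fun q => factorAt W q n) '' Set.Iio (a + p)).ncard := by
        refine Set.ncard_le_ncard ?_ ((Set.finite_Iio _).image _)
        rintro _ ⟨s, rfl⟩
        exact hrep s
    _ ≤ a + p := (Set.ncard_image_le (Set.finite_Iio _)).trans (Set.ncard_Iio_nat _).le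

lemma ncard_factors_shift_lt [Finite A] {W : ℕ → A} {u : List A} (hu : IsFactor W u) {N : ℕ}
    (hN : ∀ i, N ≤ i → ¬occursAt W u i) :
    (factors (fun t => W (N + t)) u.length).ncard < (factors W u.length).ncard := by
  have hsub : factors (fun t => W (N + t)) u.length ⊆ factors W u.length := by
    rintro _ ⟨i, rfl⟩
    exact ⟨N + i, (factorAt_shift W N i _).symm⟩
  refine Set.ncard_lt_ncard ((Set.ssubset_iff_of_subset hsub).mpr ⟨u, mem_factors.mpr ⟨rfl, hu⟩, ?_⟩)
    (factors_finite W _)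
  rintro ⟨i, hi⟩
  refine hN (N + i) (Nat.le_add_right N i) ?_
  rw [occursAt, ← factorAt_shift]
  exact hi.symm

end InfiniteWord

open InfiniteWord in
/-- A word of complexity `n + 1` is recurrent: every factor occurs infinitely
often. -/
theorem stmt5 {A : Type*} [Fintype A] (W : ℕ → A)
    (h : ∀ n : ℕ, 1 ≤ n → complexity W n = n + 1) :
    ∀ u : List A, IsFactor W u → {i : ℕ | occursAt W u i}.Infinite := by
  intro u hu hfin
  obtain ⟨N, hN⟩ : ∃ N, ∀ i, N ≤ i → ¬occursAt W u i := by
    obtain ⟨M, hM⟩ := hfin.bddAbove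
    exact ⟨M + 1, fun i hi hocc => absurd (hM hocc) (by omega)⟩
  have hlen : 1 ≤ u.length := List.length_pos_iff.mpr fun hnil =>
    hN N le_rfl (hnil ▸ occursAt_nil W N)
  have hshift := ncard_factors_shift_lt hu hN
  rw [← complexity_eq_ncard_factors W, h _ hlen] at hshift
  obtain ⟨a, p, hp, hper⟩ := exists_eventually_periodic_of_ncard_factors_le
    (Nat.lt_succ_iff.mp hshift)
  have hperW : ∀ t, N + a ≤ t → W (t + p) = W t := fun t ht => by
    have := hper (t - N) (by omega)
    rwa [← Nat.add_assoc, Nat.add_sub_cancel' (by omega : N ≤ t)] at this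
  have hbound := ncard_factors_le_of_periodic hp hperW (N + a + p)
  rw [← complexity_eq_ncard_factors W, h _ (by omega)] at hbound
  omega
end
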